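/- Let R be an irreducible simply-laced root system with Weyl group W and ρ the half-sum of positive roots. For a non-singular weight λ define ind(λ) = min{ℓ(w) : w(λ) is dominant}. If β ∈ R is such that β + ρ is non-singular, then ind(β + ρ) ∈ {0, 1}; moreover ind(β + ρ) = 0 if and only if β is the highest root, and ind(β + ρ) = 1 if and only if β is the negative of a simple root. -/

import Mathlib

/-!
STATEMENT 1. Let `R` be an irreducible simply-laced root system with Weyl group `W`
(generated by the reflections in the roots) and `ρ` the half-sum of positive roots.
For a non-singular weight `λ` define `ind(λ) = min { ℓ(w) : w(λ) is dominant }`,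
where `ℓ(w)` is the number of positive roots sent to negative roots by `w`.
If `β ∈ R` is such that `β + ρ` is non-singular, then `ind(β + ρ) ∈ {0, 1}`;
moreover `ind(β + ρ) = 0` iff `β` is the highest root, and `ind(β + ρ) = 1` iff
`β` is the negative of a simple root.
-/

open scoped RealInnerProductSpace Classical

variable {V : Type*} [NormedAddCommGroup V] [InnerProductSpace ℝ V]

/-- The Cartan pairing `⟨β, α∨⟩ = 2(β,α)/(α,α)`. -/
noncomputable def pairCo (β a : V) : ℝ := 2 * ⟪β, a⟫ / ⟪a, a⟫

/-- A (reduced, crystallographic) root system, as a finite subset of a real inner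
product space. -/
structure IsRootSystem (R : Finset V) : Prop where
  nonempty : R.Nonempty
  zero_not_mem : (0 : V) ∉ R
  crystallographic : ∀ a ∈ R, ∀ b ∈ R, ∃ n : ℤ, pairCo b a = (n : ℝ)
  reflect_mem : ∀ a ∈ R, ∀ b ∈ R, b - pairCo b a • a ∈ R
  reduced : ∀ a ∈ R, ∀ t : ℝ, t • a ∈ R → t = 1 ∨ t = -1

def IsIrreducibleRS (R : Finset V) : Prop :=
  ∀ R₁ R₂ : Finset V, R = R₁ ∪ R₂ → Disjoint R₁ R₂ →
    (∀ a ∈ R₁, ∀ b ∈ R₂, ⟪a, b⟫ = 0) → R₁ = ∅ ∨ R₂ = ∅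

def IsSimplyLaced (R : Finset V) : Prop := ∀ a ∈ R, ∀ b ∈ R, ‖a‖ = ‖b‖

noncomputable def posRoots (R : Finset V) (f : V →ₗ[ℝ] ℝ) : Finset V :=
  R.filter fun a => 0 < f a

def IsSimpleRoot (R : Finset V) (f : V →ₗ[ℝ] ℝ) (a : V) : Prop :=
  a ∈ posRoots R f ∧ ¬ ∃ b ∈ posRoots R f, ∃ c ∈ posRoots R f, a = b + c

def IsHighestRoot (R : Finset V) (f : V →ₗ[ℝ] ℝ) (θ : V) : Prop :=
  θ ∈ posRoots R f ∧ ∀ a ∈ posRoots R f, θ + a ∉ (R : Set V)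

/-- `ρ`, the half-sum of the positive roots. -/
noncomputable def halfSumPos (R : Finset V) (f : V →ₗ[ℝ] ℝ) : V :=
  (2 : ℝ)⁻¹ • ∑ a ∈ posRoots R f, a

/-- The reflection in the root `a`, as a self-map of `V`. -/
noncomputable def reflMap (a : V) : Function.End V := fun x => x - pairCo x a • a

/-- The Weyl group of `R`, realized as the monoid of self-maps of `V` generated by
the reflections in the roots (since reflections are involutions this is a group). -/
noncomputable def weylMonoid (R : Finset V) : Submonoid (Function.End V) :=
  Submonoid.closure { g | ∃ a ∈ R, g = reflMap a }

/-- The length of `w`: the number of positive roots sent to negative roots. -/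
noncomputable def lengthOf (R : Finset V) (f : V →ₗ[ℝ] ℝ) (w : Function.End V) : ℕ :=
  ((posRoots R f).filter fun a => w a ∉ posRoots R f).card

/-- `λ` is dominant if its pairing with every positive coroot is nonnegative. -/
def IsDominantWt (R : Finset V) (f : V →ₗ[ℝ] ℝ) (lam : V) : Prop :=
  ∀ a ∈ posRoots R f, 0 ≤ pairCo lam a

/-- `ind(λ) = min { ℓ(w) : w ∈ W, w(λ) dominant }`. -/
noncomputable def indOf (R : Finset V) (f : V →ₗ[ℝ] ℝ) (lam : V) : ℕ :=
  sInf { n : ℕ | ∃ w ∈ weylMonoid R, lengthOf R f w = n ∧ IsDominantWt R f (w lam) }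

section Basic
variable {a b x y : V}

lemma inner_self_pos' (ha : a ≠ 0) : 0 < ⟪a, a⟫ :=
  lt_of_le_of_ne real_inner_self_nonneg (fun h => ha (inner_self_eq_zero.mp h.symm))

lemma pairCo_self (ha : a ≠ 0) : pairCo a a = 2 := by
  have h : ⟪a, a⟫ ≠ 0 := ne_of_gt (inner_self_pos' ha)
  unfold pairCo; field_simp

lemma pairCo_add_left (x y a : V) : pairCo (x + y) a = pairCo x a + pairCo y a := by
  unfold pairCo; rw [inner_add_left]; ring

lemma pairCo_sub_left (x y a : V) : pairCo (x - y) a = pairCo x a - pairCo y a := by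
  unfold pairCo; rw [inner_sub_left]; ring

lemma pairCo_smul_left (c : ℝ) (x a : V) : pairCo (c • x) a = c * pairCo x a := by
  unfold pairCo; rw [real_inner_smul_left]; ring

lemma pairCo_neg_left (x a : V) : pairCo (-x) a = - pairCo x a := by
  unfold pairCo; rw [inner_neg_left]; ring

lemma pairCo_neg_right (x a : V) : pairCo x (-a) = - pairCo x a := by
  unfold pairCo; rw [inner_neg_right, inner_neg_neg]; ring

lemma reflMap_apply (a x : V) : reflMap a x = x - pairCo x a • a := rfl

lemma reflMap_self (ha : a ≠ 0) : reflMap a a = -a := by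
  rw [reflMap_apply, pairCo_self ha]; module

lemma reflMap_involutive (ha : a ≠ 0) (x : V) : reflMap a (reflMap a x) = x := by
  rw [reflMap_apply, reflMap_apply, pairCo_sub_left, pairCo_smul_left, pairCo_self ha]
  module

lemma reflMap_add (a x y : V) : reflMap a (x + y) = reflMap a x + reflMap a y := by
  simp only [reflMap_apply, pairCo_add_left]; module

lemma reflMap_sub (a x y : V) : reflMap a (x - y) = reflMap a x - reflMap a y := by
  simp only [reflMap_apply, pairCo_sub_left]; module

lemma reflMap_inner (ha : a ≠ 0) (x y : V) : ⟪reflMap a x, reflMap a y⟫ = ⟪x, y⟫ := by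
  have h : ⟪a, a⟫ ≠ 0 := ne_of_gt (inner_self_pos' ha)
  simp only [reflMap_apply, pairCo, inner_sub_left, inner_sub_right, real_inner_smul_left,
    real_inner_smul_right]
  field_simp
  rw [real_inner_comm a x, real_inner_comm a y]
  ring

lemma reflMap_sum (a : V) (s : Finset V) : reflMap a (∑ b ∈ s, b) = ∑ b ∈ s, reflMap a b := by
  classical
  induction s using Finset.induction with
  | empty => simp [reflMap_apply, pairCo]
  | insert _ _ hx ih => rw [Finset.sum_insert hx, Finset.sum_insert (f := fun b => reflMap a b) hx, reflMap_add, ih]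

end Basic

section Roots
variable {R : Finset V} {f : V →ₗ[ℝ] ℝ} {a b α : V}

lemma root_ne_zero (hR : IsRootSystem R) (ha : a ∈ R) : a ≠ 0 :=
  fun h => hR.zero_not_mem (h ▸ ha)

lemma inner_self_root_pos (hR : IsRootSystem R) (ha : a ∈ R) : 0 < ⟪a, a⟫ :=
  inner_self_pos' (root_ne_zero hR ha)

lemma inner_self_eq (hsl : IsSimplyLaced R) (ha : a ∈ R) (hb : b ∈ R) : ⟪a, a⟫ = ⟪b, b⟫ := by
  rw [real_inner_self_eq_norm_mul_norm, real_inner_self_eq_norm_mul_norm, hsl a ha b hb]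

lemma neg_mem_root (hR : IsRootSystem R) (ha : a ∈ R) : -a ∈ R := by
  have h := hR.reflect_mem a ha a ha
  rwa [pairCo_self (root_ne_zero hR ha), show a - (2:ℝ) • a = -a by module] at h

lemma pairCo_symm (hsl : IsSimplyLaced R) (ha : a ∈ R) (hb : b ∈ R) :
    pairCo a b = pairCo b a := by
  unfold pairCo
  rw [inner_self_eq hsl hb ha, real_inner_comm a b]

lemma pairCo_abs_le (hR : IsRootSystem R) (hsl : IsSimplyLaced R) (ha : a ∈ R) (hb : b ∈ R) :
    |pairCo b a| ≤ 2 := by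
  have h2 : 0 < ⟪a, a⟫ := inner_self_root_pos hR ha
  have h1 : |⟪b, a⟫| ≤ ⟪a, a⟫ := by
    calc |⟪b, a⟫| ≤ ‖b‖ * ‖a‖ := abs_real_inner_le_norm b a
    _ = ⟪a, a⟫ := by rw [hsl b hb a ha, real_inner_self_eq_norm_mul_norm]
  have h3 : |pairCo b a| = 2 * |⟪b, a⟫| / ⟪a, a⟫ := by
    unfold pairCo; rw [abs_div, abs_of_pos h2, abs_mul]; norm_num
  rw [h3, div_le_iff₀ h2]; linarith

lemma eq_neg_of_pairCo_eq_neg_two (hR : IsRootSystem R) (hsl : IsSimplyLaced R)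
    (ha : a ∈ R) (hb : b ∈ R) (h : pairCo b a = -2) : b = -a := by
  have h2 : 0 < ⟪a, a⟫ := inner_self_root_pos hR ha
  have hba : ⟪b, a⟫ = -⟪a, a⟫ := by
    unfold pairCo at h; rw [div_eq_iff (ne_of_gt h2)] at h; linarith
  have hz : ⟪a + b, a + b⟫ = 0 := by
    rw [real_inner_add_add_self, real_inner_comm b a, hba, inner_self_eq hsl hb ha]; ring
  exact eq_neg_of_add_eq_zero_right (inner_self_eq_zero.mp hz)

lemma eq_of_pairCo_eq_two (hR : IsRootSystem R) (hsl : IsSimplyLaced R)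
    (ha : a ∈ R) (hb : b ∈ R) (h : pairCo b a = 2) : b = a := by
  have h' : pairCo (-b) a = -2 := by rw [pairCo_neg_left, h]
  have := eq_neg_of_pairCo_eq_neg_two hR hsl ha (neg_mem_root hR hb) h'
  simpa using neg_injective this

lemma pairCo_eq_neg_one_of_add_mem (hR : IsRootSystem R) (hsl : IsSimplyLaced R)
    (ha : a ∈ R) (hb : b ∈ R) (hab : a + b ∈ R) : pairCo b a = -1 := by
  have h2 : 0 < ⟪a, a⟫ := inner_self_root_pos hR ha
  have h3 : ⟪a + b, a + b⟫ = ⟪a, a⟫ := inner_self_eq hsl hab ha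
  rw [real_inner_add_add_self, inner_self_eq hsl hb ha] at h3
  unfold pairCo
  rw [real_inner_comm a b, div_eq_iff (ne_of_gt h2)]
  linarith

lemma add_mem_of_pairCo_eq_neg_one (hR : IsRootSystem R)
    (ha : a ∈ R) (hb : b ∈ R) (h : pairCo b a = -1) : a + b ∈ R := by
  have h' := hR.reflect_mem a ha b hb
  rwa [h, show b - (-1:ℝ) • a = a + b by module] at h'

lemma mem_posRoots : a ∈ posRoots R f ↔ a ∈ R ∧ 0 < f a := Finset.mem_filter

lemma posRoots_subset (h : a ∈ posRoots R f) : a ∈ R := (Finset.filter_subset _ _) h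

lemma neg_mem_posRoots (hR : IsRootSystem R) (hf : ∀ a ∈ R, f a ≠ 0)
    (ha : a ∈ R) (h : ¬ 0 < f a) : -a ∈ posRoots R f := by
  refine mem_posRoots.mpr ⟨neg_mem_root hR ha, ?_⟩
  have h1 := hf a ha
  have h2 : f (-a) = - f a := by rw [map_neg]
  rw [h2]
  rcases lt_or_gt_of_ne h1 with h3 | h3
  · linarith
  · exact absurd h3 h

/-- The "cone" lemma: if `λ` pairs nonnegatively with all simple roots, it pairs
nonnegatively with all positive roots. -/
lemma inner_nonneg_of_simples {lam : V}
    (h : ∀ α, IsSimpleRoot R f α → 0 ≤ ⟪lam, α⟫) :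
    ∀ a ∈ posRoots R f, 0 ≤ ⟪lam, a⟫ := by
  by_contra hcon
  push_neg at hcon
  obtain ⟨a, haP, hneg⟩ := hcon
  set B := (posRoots R f).filter (fun b => ⟪lam, b⟫ < 0) with hB
  have hBne : B.Nonempty := ⟨a, Finset.mem_filter.mpr ⟨haP, hneg⟩⟩
  obtain ⟨c, hcB, hmin⟩ := B.exists_min_image f hBne
  obtain ⟨hcP, hclam⟩ := Finset.mem_filter.mp hcB
  have hcns : ¬ IsSimpleRoot R f c := fun hs => absurd (h c hs) (not_le.mpr hclam)
  have hdec : ∃ b ∈ posRoots R f, ∃ d ∈ posRoots R f, c = b + d := by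
    by_contra hd
    exact hcns ⟨hcP, hd⟩
  obtain ⟨b, hbP, d, hdP, hcbd⟩ := hdec
  have hfb : 0 < f b := (mem_posRoots.mp hbP).2
  have hfd : 0 < f d := (mem_posRoots.mp hdP).2
  have hfc : f c = f b + f d := by rw [hcbd, map_add]
  have hlbd : ⟪lam, b⟫ + ⟪lam, d⟫ < 0 := by rw [← inner_add_right, ← hcbd]; exact hclam
  rcases lt_or_ge ⟪lam, b⟫ 0 with hb' | hb'
  · have := hmin b (Finset.mem_filter.mpr ⟨hbP, hb'⟩)
    linarith
  · have hd' : ⟪lam, d⟫ < 0 := by linarith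
    have := hmin d (Finset.mem_filter.mpr ⟨hdP, hd'⟩)
    linarith

lemma pairCo_int (hR : IsRootSystem R) (ha : a ∈ R) (hb : b ∈ R) : ∃ n : ℤ, pairCo b a = n :=
  hR.crystallographic a ha b hb

lemma reflMap_mem (hR : IsRootSystem R) (ha : a ∈ R) (hb : b ∈ R) : reflMap a b ∈ R :=
  hR.reflect_mem a ha b hb

lemma reflMap_simple_mem (hR : IsRootSystem R) (hsl : IsSimplyLaced R)
    (hf : ∀ a ∈ R, f a ≠ 0) (hα : IsSimpleRoot R f α) (hb : b ∈ posRoots R f)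
    (hne : b ≠ α) : reflMap α b ∈ posRoots R f := by
  obtain ⟨hαP, hαns⟩ := hα
  obtain ⟨hαR, hfα⟩ := mem_posRoots.mp hαP
  obtain ⟨hbR, hfb⟩ := mem_posRoots.mp hb
  rcases le_or_gt (pairCo b α) 0 with hc | hc
  · refine mem_posRoots.mpr ⟨reflMap_mem hR hαR hbR, ?_⟩
    have hfr : f (reflMap α b) = f b - pairCo b α * f α := by
      rw [reflMap_apply, map_sub, map_smul]; simp [smul_eq_mul]
    rw [hfr]; nlinarith
  · obtain ⟨n, hn⟩ := pairCo_int hR hαR hbR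
    have habs := pairCo_abs_le hR hsl hαR hbR
    have hne2 : pairCo b α ≠ 2 := fun h => hne (eq_of_pairCo_eq_two hR hsl hαR hbR h)
    have hn1 : pairCo b α = 1 := by
      rw [hn] at hc habs hne2 ⊢
      have h1 : (0:ℤ) < n := by exact_mod_cast hc
      have h3 : n ≤ 2 := by exact_mod_cast (abs_le.mp habs).2
      have h4 : n ≠ 2 := fun h => hne2 (by rw [h]; norm_num)
      have h5 : n = 1 := by omega
      rw [h5]; norm_num
    have hmem : b - α ∈ R := by
      have h6 := reflMap_mem hR hαR hbR
      rwa [reflMap_apply, hn1, one_smul] at h6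
    have hf1 : f (b - α) ≠ 0 := hf _ hmem
    have hrw : reflMap α b = b - α := by rw [reflMap_apply, hn1, one_smul]
    rw [hrw]
    rcases lt_or_gt_of_ne hf1 with hneg | hpos
    · exfalso
      have h5 : α - b ∈ posRoots R f := by
        refine mem_posRoots.mpr ⟨?_, ?_⟩
        · have h7 := neg_mem_root hR hmem; rwa [neg_sub] at h7
        · have h8 : f (α - b) = - f (b - α) := by rw [map_sub, map_sub]; ring
          rw [h8]; linarith
      exact hαns ⟨b, hb, α - b, h5, by abel⟩
    · exact mem_posRoots.mpr ⟨hmem, hpos⟩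

lemma pairCo_halfSum_simple (hR : IsRootSystem R) (hsl : IsSimplyLaced R)
    (hf : ∀ a ∈ R, f a ≠ 0) (hα : IsSimpleRoot R f α) :
    pairCo (halfSumPos R f) α = 1 := by
  have hαP := hα.1
  obtain ⟨hαR, hfα⟩ := mem_posRoots.mp hαP
  have hα0 : α ≠ 0 := root_ne_zero hR hαR
  set P := posRoots R f with hP
  set E := P.erase α with hE
  have hmapsto : ∀ b ∈ E, reflMap α b ∈ E := by
    intro b hbE
    obtain ⟨hbne, hbP⟩ := Finset.mem_erase.mp hbE
    refine Finset.mem_erase.mpr ⟨?_, reflMap_simple_mem hR hsl hf hα hbP hbne⟩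
    intro h
    have h1 : b = reflMap α α := by rw [← reflMap_involutive hα0 b, h]
    rw [reflMap_self hα0] at h1
    have h2 : f b = - f α := by rw [h1, map_neg]
    have h3 := (mem_posRoots.mp hbP).2
    rw [h2] at h3; linarith
  have hsum : ∑ b ∈ E, reflMap α b = ∑ b ∈ E, b := by
    refine Finset.sum_nbij' (fun b => reflMap α b) (fun b => reflMap α b)
      ?_ ?_ ?_ ?_ ?_
    · exact hmapsto
    · exact hmapsto
    · intro b _; exact reflMap_involutive hα0 b
    · intro b _; exact reflMap_involutive hα0 b
    · intro b _; rfl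
  have hσ : (∑ b ∈ P, b) = α + ∑ b ∈ E, b := by
    rw [hE]
    exact (Finset.add_sum_erase P (fun x => x) hαP).symm
  have hrefl : (∑ b ∈ P, b) - pairCo (∑ b ∈ P, b) α • α = (∑ b ∈ P, b) - (2:ℝ) • α := by
    have h4 : reflMap α (∑ b ∈ P, b) = (∑ b ∈ P, b) - (2:ℝ) • α := by
      rw [hσ, reflMap_add, reflMap_self hα0, reflMap_sum, hsum]
      module
    rw [reflMap_apply] at h4
    exact h4
  have h1 : pairCo (∑ b ∈ P, b) α • α = (2:ℝ) • α := sub_right_injective hrefl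
  have hc2 : pairCo (∑ b ∈ P, b) α = 2 := smul_left_injective ℝ hα0 h1
  unfold halfSumPos
  rw [pairCo_smul_left]
  rw [← hP, hc2]
  norm_num

lemma halfSum_dominant (hR : IsRootSystem R) (hsl : IsSimplyLaced R)
    (hf : ∀ a ∈ R, f a ≠ 0) : ∀ a ∈ posRoots R f, 0 ≤ pairCo (halfSumPos R f) a := by
  intro a haP
  have hin : 0 ≤ ⟪halfSumPos R f, a⟫ := by
    refine inner_nonneg_of_simples ?_ a haP
    intro α hα
    have h1 := pairCo_halfSum_simple hR hsl hf hα
    have hαR : α ∈ R := posRoots_subset hα.1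
    have h2 : 0 < ⟪α, α⟫ := inner_self_root_pos hR hαR
    unfold pairCo at h1
    rw [div_eq_iff (ne_of_gt h2)] at h1
    linarith
  have h2 : 0 < ⟪a, a⟫ := inner_self_root_pos hR (posRoots_subset haP)
  exact div_nonneg (by linarith) (le_of_lt h2)

lemma inner_nonneg_of_pairCo_nonneg {x : V} (h2 : 0 < ⟪a, a⟫) (h : 0 ≤ pairCo x a) :
    0 ≤ ⟪x, a⟫ := by
  have h10 := mul_nonneg h h2.le
  unfold pairCo at h10
  rw [div_mul_cancel₀ _ (ne_of_gt h2)] at h10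
  linarith

lemma highest_or_neg_simple (hR : IsRootSystem R) (hsl : IsSimplyLaced R)
    (hf : ∀ a ∈ R, f a ≠ 0) {β : V} (hβ : β ∈ R)
    (hns : ∀ a ∈ posRoots R f, pairCo (β + halfSumPos R f) a ≠ 0) :
    IsHighestRoot R f β ∨ ∃ α, IsSimpleRoot R f α ∧ β = -α := by
  set ρ := halfSumPos R f with hρ
  by_cases hdom : ∀ α, IsSimpleRoot R f α → 0 ≤ ⟪β + ρ, α⟫
  · left
    have hsimple : ∀ α, IsSimpleRoot R f α → 0 ≤ ⟪β, α⟫ := by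
      intro α hα
      have hαR : α ∈ R := posRoots_subset hα.1
      have h2 : 0 < ⟪α, α⟫ := inner_self_root_pos hR hαR
      have h3 : pairCo (β + ρ) α ≠ 0 := hns α hα.1
      have h4 : 0 ≤ pairCo (β + ρ) α :=
        div_nonneg (by have := hdom α hα; linarith) h2.le
      have h5 : 0 < pairCo (β + ρ) α := lt_of_le_of_ne h4 (Ne.symm h3)
      rw [pairCo_add_left, pairCo_halfSum_simple hR hsl hf hα] at h5
      obtain ⟨n, hn⟩ := pairCo_int hR hαR hβ
      rw [hn] at h5
      have h6 : (-1:ℝ) < n := by linarith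
      have h7 : (-1:ℤ) < n := by exact_mod_cast h6
      have h7' : (0:ℤ) ≤ n := by omega
      have h8 : 0 ≤ pairCo β α := by rw [hn]; exact_mod_cast h7'
      have h9 := inner_nonneg_of_pairCo_nonneg h2 h8
      linarith [h9]
    have hall : ∀ a ∈ posRoots R f, 0 ≤ ⟪β, a⟫ := inner_nonneg_of_simples hsimple
    have hdomβ : ∀ a ∈ posRoots R f, 0 ≤ pairCo β a := fun a haP =>
      div_nonneg (by have := hall a haP; linarith)
        (inner_self_root_pos hR (posRoots_subset haP)).le
    have hβP : β ∈ posRoots R f := by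
      by_contra hc
      have hβne : ¬ 0 < f β := fun h => hc (mem_posRoots.mpr ⟨hβ, h⟩)
      have h1 := neg_mem_posRoots hR hf hβ hβne
      have h2 := hdomβ _ h1
      rw [pairCo_neg_right, pairCo_self (root_ne_zero hR hβ)] at h2
      linarith
    refine ⟨hβP, ?_⟩
    intro a haP hmem
    have haR : a ∈ R := posRoots_subset haP
    have h1 : a + β ∈ R := by
      have := Finset.mem_coe.mp hmem
      rwa [add_comm] at this
    have h2 := pairCo_eq_neg_one_of_add_mem hR hsl haR hβ h1
    have h3 := hdomβ a haP
    linarith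
  · push_neg at hdom
    obtain ⟨α, hα, hneg⟩ := hdom
    right
    refine ⟨α, hα, ?_⟩
    have hαR : α ∈ R := posRoots_subset hα.1
    have h2 : 0 < ⟪α, α⟫ := inner_self_root_pos hR hαR
    have h3 : pairCo (β + ρ) α < 0 := by
      unfold pairCo
      exact div_neg_of_neg_of_pos (by linarith) h2
    rw [pairCo_add_left, pairCo_halfSum_simple hR hsl hf hα] at h3
    obtain ⟨n, hn⟩ := pairCo_int hR hαR hβ
    rw [hn] at h3
    have habs := pairCo_abs_le hR hsl hαR hβ
    rw [hn] at habs
    have h4 : (n:ℝ) < -1 := by linarith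
    have h5 : (-2:ℝ) ≤ n := (abs_le.mp habs).1
    have h4' : n < -1 := by exact_mod_cast h4
    have h5' : (-2:ℤ) ≤ n := by exact_mod_cast h5
    have h6 : n = -2 := by omega
    exact eq_neg_of_pairCo_eq_neg_two hR hsl hαR hβ (by rw [hn, h6]; norm_num)

lemma dominant_of_highest (hR : IsRootSystem R) (hsl : IsSimplyLaced R)
    (hf : ∀ a ∈ R, f a ≠ 0) {β : V} (hh : IsHighestRoot R f β) :
    IsDominantWt R f (β + halfSumPos R f) := by
  intro a haP
  rw [pairCo_add_left]
  have h1 := halfSum_dominant hR hsl hf a haP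
  have haR : a ∈ R := posRoots_subset haP
  have hβP := hh.1
  obtain ⟨hβR, hfβ⟩ := mem_posRoots.mp hβP
  have hfa : 0 < f a := (mem_posRoots.mp haP).2
  have h2 : 0 ≤ pairCo β a := by
    by_contra hc
    push_neg at hc
    obtain ⟨n, hn⟩ := pairCo_int hR haR hβR
    have habs := pairCo_abs_le hR hsl haR hβR
    rw [hn] at hc habs
    have h3 : n < 0 := by exact_mod_cast hc
    have h4 : (-2:ℤ) ≤ n := by exact_mod_cast (abs_le.mp habs).1
    have h5 : n = -2 ∨ n = -1 := by omega
    rcases h5 with h5 | h5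
    · have h6 : β = -a := eq_neg_of_pairCo_eq_neg_two hR hsl haR hβR (by rw [hn, h5]; norm_num)
      rw [h6, map_neg] at hfβ
      linarith
    · have h6 : a + β ∈ R :=
        add_mem_of_pairCo_eq_neg_one hR haR hβR (by rw [hn, h5]; norm_num)
      have h7 : β + a ∈ (R : Set V) := by
        rw [add_comm] at h6
        exact Finset.mem_coe.mpr h6
      exact hh.2 a haP h7
  linarith

lemma weyl_inner (hR : IsRootSystem R) {w : Function.End V} (hw : w ∈ weylMonoid R) :
    ∀ x y : V, ⟪w x, w y⟫ = ⟪x, y⟫ := by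
  induction hw using Submonoid.closure_induction with
  | mem g hg =>
    obtain ⟨a, ha, rfl⟩ := hg
    exact reflMap_inner (root_ne_zero hR ha)
  | one => intro x y; rfl
  | mul w₁ w₂ h₁ h₂ ih₁ ih₂ =>
    intro x y
    calc ⟪(w₁ * w₂) x, (w₁ * w₂) y⟫ = ⟪w₁ (w₂ x), w₁ (w₂ y)⟫ := rfl
    _ = ⟪w₂ x, w₂ y⟫ := ih₁ _ _
    _ = ⟪x, y⟫ := ih₂ _ _

lemma dominant_of_length_zero (hR : IsRootSystem R) {w : Function.End V}
    (hw : w ∈ weylMonoid R) {lam : V} (hlen : lengthOf R f w = 0)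
    (hdom : IsDominantWt R f (w lam)) : IsDominantWt R f lam := by
  have hfe : ∀ a ∈ posRoots R f, w a ∈ posRoots R f := by
    intro a ha
    by_contra hc
    have h1 : a ∈ (posRoots R f).filter (fun a => w a ∉ posRoots R f) :=
      Finset.mem_filter.mpr ⟨ha, hc⟩
    unfold lengthOf at hlen
    rw [Finset.card_eq_zero] at hlen
    rw [hlen] at h1
    exact absurd h1 (Finset.notMem_empty a)
  intro a haP
  have h1 := hdom (w a) (hfe a haP)
  have h2 := weyl_inner hR hw
  have h3 : pairCo (w lam) (w a) = pairCo lam a := by unfold pairCo; rw [h2, h2]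
  rwa [h3] at h1

end Roots


theorem index_of_nonsingular_root_plus_rho
    (R : Finset V) (hR : IsRootSystem R) (hirr : IsIrreducibleRS R)
    (hsl : IsSimplyLaced R)
    (f : V →ₗ[ℝ] ℝ) (hf : ∀ a ∈ R, f a ≠ 0)
    (β : V) (hβ : β ∈ R)
    (hns : ∀ a ∈ posRoots R f, pairCo (β + halfSumPos R f) a ≠ 0) :
    (indOf R f (β + halfSumPos R f) = 0 ∨ indOf R f (β + halfSumPos R f) = 1) ∧
    (indOf R f (β + halfSumPos R f) = 0 ↔ IsHighestRoot R f β) ∧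
    (indOf R f (β + halfSumPos R f) = 1 ↔ ∃ a, IsSimpleRoot R f a ∧ β = -a) := by
  classical
  set ρ := halfSumPos R f with hρdef
  set S := {n : ℕ | ∃ w ∈ weylMonoid R, lengthOf R f w = n ∧
    IsDominantWt R f (w (β + ρ))} with hSdef
  have hind_eq : indOf R f (β + ρ) = sInf S := rfl
  rcases highest_or_neg_simple hR hsl hf hβ hns with hh | ⟨α, hα, hβα⟩
  · have hdom : IsDominantWt R f (β + ρ) := dominant_of_highest hR hsl hf hh
    have h0mem : 0 ∈ S := by
      refine ⟨1, one_mem _, ?_, ?_⟩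
      · unfold lengthOf
        simp only [Finset.card_eq_zero, Finset.filter_eq_empty_iff]
        intro a ha
        exact fun h => h ha
      · exact hdom
    have hind : indOf R f (β + ρ) = 0 := by
      rw [hind_eq]
      exact Nat.sInf_eq_zero.mpr (Or.inl h0mem)
    refine ⟨Or.inl hind, ⟨fun _ => hh, fun _ => hind⟩, ?_, ?_⟩
    · intro h1; rw [hind] at h1; exact absurd h1 (by norm_num)
    · rintro ⟨γ, hγ, hβγ⟩
      exfalso
      have hfβ := (mem_posRoots.mp hh.1).2
      have hfγ := (mem_posRoots.mp hγ.1).2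
      rw [hβγ, map_neg] at hfβ
      linarith
  · have hαP := hα.1
    obtain ⟨hαR, hfα⟩ := mem_posRoots.mp hαP
    have hα0 : α ≠ 0 := root_ne_zero hR hαR
    have hwmem : reflMap α ∈ weylMonoid R := Submonoid.subset_closure ⟨α, hαR, rfl⟩
    have hlen1 : lengthOf R f (reflMap α) = 1 := by
      unfold lengthOf
      have hfil : (posRoots R f).filter (fun b => reflMap α b ∉ posRoots R f) = {α} := by
        ext b
        simp only [Finset.mem_filter, Finset.mem_singleton]
        constructor
        · rintro ⟨hbP, hbn⟩
          by_contra hne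
          exact hbn (reflMap_simple_mem hR hsl hf hα hbP hne)
        · rintro rfl
          refine ⟨hαP, ?_⟩
          rw [reflMap_self hα0]
          intro hmem
          have h2 := (mem_posRoots.mp hmem).2
          rw [map_neg] at h2
          linarith
      rw [hfil, Finset.card_singleton]
    have hwlam : reflMap α (β + ρ) = ρ := by
      rw [hβα, reflMap_apply, pairCo_add_left, pairCo_neg_left, pairCo_self hα0,
        pairCo_halfSum_simple hR hsl hf hα]
      module
    have hdomρ : IsDominantWt R f ρ := halfSum_dominant hR hsl hf
    have h1mem : 1 ∈ S := ⟨reflMap α, hwmem, hlen1, by rw [hwlam]; exact hdomρ⟩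
    have hnotdom : ¬ IsDominantWt R f (β + ρ) := by
      intro hd
      have h2 := hd α hαP
      rw [hβα, pairCo_add_left, pairCo_neg_left, pairCo_self hα0,
        pairCo_halfSum_simple hR hsl hf hα] at h2
      linarith
    have h0not : 0 ∉ S := by
      rintro ⟨w, hwW, hl, hd⟩
      exact hnotdom (dominant_of_length_zero hR hwW hl hd)
    have hind : indOf R f (β + ρ) = 1 := by
      rw [hind_eq]
      have hne : S.Nonempty := ⟨1, h1mem⟩
      have hmem := Nat.sInf_mem hne
      have hle := Nat.sInf_le h1mem
      have h0 : sInf S ≠ 0 := fun h => h0not (h ▸ hmem)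
      omega
    refine ⟨Or.inr hind, ?_, fun _ => ⟨α, hα, hβα⟩, fun _ => hind⟩
    constructor
    · intro h1; rw [hind] at h1; exact absurd h1 one_ne_zero
    · intro hh
      exfalso
      have hfβ := (mem_posRoots.mp hh.1).2
      rw [hβα, map_neg] at hfβ
      linarith
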